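/- Let E be a countable set with at least two elements and let Q be a uniformly bounded intensity matrix on E. Let h > 0 be such that 1 + h·Q(i,i) ≥ h·Q(j,i) for all i,j ∈ E, and let P_h = I + hQ (so P_h is a stochastic matrix). Define Λ₁(Q) = (1/2) inf_{i ≠ j} [ |Q(i,i) − Q(j,i)| + |Q(i,j) − Q(j,j)| − ∑_{s ≠ i, s ≠ j} |Q(i,s) − Q(j,s)| ] and assume 1 − h·Λ₁(Q) ≥ 0. Then the ergodicity coefficient of P_h satisfies Λ₁(P_h) = 1 − h·Λ₁(Q), where Λ₁(P_h) = (1/2) sup_{i,j} ∑_k |P_h(i,k) − P_h(j,k)|. -/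

import Mathlib

open scoped Classical ENNReal NNReal
open Filter MeasureTheory

noncomputable section

variable {E : Type*}

def matPow (P : E → E → ℝ) : ℕ → E → E → ℝ
  | 0 => fun i j => if i = j then (1 : ℝ) else 0
  | n + 1 => fun i j => ∑' k, matPow P n i k * P k j

def IsStochastic (P : E → E → ℝ) : Prop :=
  (∀ i j, 0 ≤ P i j) ∧ ∀ i, ∑' j, P i j = 1

def IsIrred (P : E → E → ℝ) : Prop :=
  ∀ i j, ∃ n, 1 ≤ n ∧ 0 < matPow P n i j

def IsProbVec (π : E → ℝ) : Prop :=
  (∀ i, 0 ≤ π i) ∧ ∑' i, π i = 1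

def InvariantFor (π : E → ℝ) (P : E → E → ℝ) : Prop :=
  ∀ j, HasSum (fun i => π i * P i j) (π j)

def vecNorm (μ : E → ℝ) : ℝ := ∑' i, |μ i|

def rowSumNorm (L : E → E → ℝ) : ℝ := ⨆ i, ∑' j, |L i j|

def ergCoeff (B : E → E → ℝ) : ℝ :=
  (1 / 2) * ⨆ p : E × E, ∑' k, |B p.1 k - B p.2 k|

def IsIntensity (Q : E → E → ℝ) : Prop :=
  (∀ i j, i ≠ j → 0 ≤ Q i j) ∧ ∀ i, HasSum (Q i) 0

def UnifBdd (Q : E → E → ℝ) : Prop := ∃ M : ℝ, ∀ i, -Q i i ≤ M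

def QIrred (Q : E → E → ℝ) : Prop :=
  ∀ i j, i ≠ j → ∃ (r : ℕ) (k : ℕ → E), 1 ≤ r ∧ k 0 = i ∧ k r = j ∧
    ∀ s < r, 0 < Q (k s) (k (s + 1))

def QInvariant (π : E → ℝ) (Q : E → E → ℝ) : Prop :=
  ∀ j, HasSum (fun i => π i * Q i j) 0

def transP (Q : E → E → ℝ) (t : ℝ) : E → E → ℝ :=
  fun i j => ∑' n : ℕ, t ^ n / (Nat.factorial n : ℝ) * matPow Q n i j

def qErgCoeff (Q : E → E → ℝ) : ℝ :=
  (1 / 2) * ⨅ p : {p : E × E // p.1 ≠ p.2},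
    (|Q p.val.1 p.val.1 - Q p.val.2 p.val.1| + |Q p.val.1 p.val.2 - Q p.val.2 p.val.2|
      - ∑' s : E, if s ≠ p.val.1 ∧ s ≠ p.val.2 then |Q p.val.1 s - Q p.val.2 s| else 0)

def vVecNorm (V : E → ℝ) (μ : E → ℝ) : ℝ≥0∞ := ∑' i, ENNReal.ofReal (|μ i| * V i)

def vMatNorm (V : E → ℝ) (L : E → E → ℝ) : ℝ≥0∞ :=
  ⨆ i, (∑' j, ENNReal.ofReal (|L i j| * V j)) / ENNReal.ofReal (V i)

def vOneNorm (V : E → ℝ) : ℝ≥0∞ := ⨆ i, 1 / ENNReal.ofReal (V i)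

/-!
For `i ≠ j` the rows `i` and `j` of `P_h = I + hQ` differ by `1 + h Q(i,i) - h Q(j,i) ≥ 0` in
column `i`, by `h Q(i,j) - 1 - h Q(j,j) ≤ 0` in column `j`, and by `h (Q(i,s) - Q(j,s))`
elsewhere.
Since the off-diagonal entries of `Q` are nonnegative and its diagonal is nonpositive, this gives
exactly `∑ₖ |P_h(i,k) - P_h(j,k)| = 2 - h·F(i,j)`, where `F(i,j)` is the quantity minimised in
`Λ₁(Q)`. As `t ↦ 2 - h t` is decreasing, the supremum over pairs becomes `2 - h · inf F`;
diagonal pairs contribute `0` and do not affect the supremum.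
-/

def rowDist (B : E → E → ℝ) (i j : E) : ℝ := ∑' k, |B i k - B j k|

def tailRowDist (B : E → E → ℝ) (i j : E) : ℝ :=
  ∑' s, if s ≠ i ∧ s ≠ j then |B i s - B j s| else 0

def qErgTerm (Q : E → E → ℝ) (i j : E) : ℝ :=
  |Q i i - Q j i| + |Q i j - Q j j| - tailRowDist Q i j

def eulerStep (Q : E → E → ℝ) (h : ℝ) : E → E → ℝ :=
  fun i j => (if i = j then (1 : ℝ) else 0) + h * Q i j

theorem ergCoeff_eq_iSup_rowDist (B : E → E → ℝ) :
    ergCoeff B = 1 / 2 * ⨆ p : E × E, rowDist B p.1 p.2 := rfl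

theorem qErgCoeff_eq_iInf_qErgTerm (Q : E → E → ℝ) :
    qErgCoeff Q = 1 / 2 * ⨅ p : {p : E × E // p.1 ≠ p.2}, qErgTerm Q p.1.1 p.1.2 := rfl

theorem HasSum.ite_ne_and_ne {β α : Type*} [AddCommGroup α] [TopologicalSpace α]
    [IsTopologicalAddGroup α] {f : β → α} {a : α} (hf : HasSum f a) {i j : β}
    (hij : i ≠ j) :
    HasSum (fun k => if k ≠ i ∧ k ≠ j then f k else 0) (a - f i - f j) := by
  have h := hasSum_ite_sub_hasSum (hasSum_ite_sub_hasSum hf i) j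
  rw [if_neg hij.symm] at h
  convert h using 2 with k
  by_cases hki : k = i <;> by_cases hkj : k = j <;> simp [hki, hkj]

theorem tsum_eq_add_add_tsum_ite_ne_and_ne {β α : Type*} [AddCommGroup α] [TopologicalSpace α]
    [IsTopologicalAddGroup α] [T2Space α] {f : β → α} (hf : Summable f) {i j : β}
    (hij : i ≠ j) :
    ∑' k, f k = f i + f j + ∑' k, if k ≠ i ∧ k ≠ j then f k else 0 := by
  rw [(hf.hasSum.ite_ne_and_ne hij).tsum_eq]
  abel

theorem ciSup_eq_ciSup_subtype_of_dominated {ι α : Type*} [ConditionallyCompleteLattice α]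
    {p : ι → Prop} [Nonempty (Subtype p)] {f : ι → α}
    (hbdd : BddAbove (Set.range fun j : Subtype p => f j))
    (hdom : ∀ i, ¬ p i → ∃ j, p j ∧ f i ≤ f j) :
    ⨆ i, f i = ⨆ j : Subtype p, f j := by
  have hle (i : ι) : f i ≤ ⨆ j : Subtype p, f j := by
    by_cases hi : p i
    · exact le_ciSup hbdd ⟨i, hi⟩
    · obtain ⟨j, hj, hij⟩ := hdom i hi
      exact hij.trans (le_ciSup hbdd ⟨j, hj⟩)
  have : Nonempty ι := ⟨(Classical.arbitrary (Subtype p)).1⟩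
  exact le_antisymm (ciSup_le hle)
    (ciSup_le fun j => le_ciSup ⟨_, Set.forall_mem_range.2 hle⟩ j.1)

theorem rowDist_self (B : E → E → ℝ) (i : E) : rowDist B i i = 0 := by
  simp [rowDist]

theorem rowDist_nonneg (B : E → E → ℝ) (i j : E) : 0 ≤ rowDist B i j :=
  tsum_nonneg fun _ => abs_nonneg _

theorem rowDist_eq_of_ne {B : E → E → ℝ} {i j : E} (hB : Summable fun k => |B i k - B j k|)
    (hij : i ≠ j) :
    rowDist B i j = |B i i - B j i| + |B i j - B j j| + tailRowDist B i j :=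
  tsum_eq_add_add_tsum_ite_ne_and_ne hB hij

theorem tailRowDist_eulerStep (Q : E → E → ℝ) {h : ℝ} (hh : 0 ≤ h) (i j : E) :
    tailRowDist (eulerStep Q h) i j = h * tailRowDist Q i j := by
  rw [tailRowDist, tailRowDist, ← tsum_mul_left]
  congr 1 with s
  split_ifs with hs
  · simp only [eulerStep, if_neg (Ne.symm hs.1), if_neg (Ne.symm hs.2)]
    rw [zero_add, zero_add, ← mul_sub, abs_mul, abs_of_nonneg hh]
  · rw [mul_zero]

namespace IsIntensity

variable {Q : E → E → ℝ}

theorem diag_nonpos (hQ : IsIntensity Q) (i : E) : Q i i ≤ 0 := by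
  have h := hasSum_ite_sub_hasSum (hQ.2 i) i
  have : 0 ≤ 0 - Q i i := h.nonneg fun k => by
    split_ifs with hk
    · exact le_rfl
    · exact hQ.1 i k (Ne.symm hk)
  linarith

theorem hasSum_eulerStep (hQ : IsIntensity Q) (h : ℝ) (i : E) : HasSum (eulerStep Q h i) 1 := by
  have hδ : HasSum (fun k => if i = k then (1 : ℝ) else 0) 1 := by
    simpa only [eq_comm] using hasSum_ite_eq i (1 : ℝ)
  unfold eulerStep
  simpa only [mul_zero, add_zero] using hδ.add ((hQ.2 i).mul_left h)

theorem tailRowDist_le (hQ : IsIntensity Q) {i j : E} (hij : i ≠ j) :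
    tailRowDist Q i j ≤ -(Q i i + Q j i) - (Q i j + Q j j) := by
  have hsum := ((hQ.2 i).add (hQ.2 j)).ite_ne_and_ne hij
  have htail := ((((hQ.2 i).summable.sub (hQ.2 j).summable).abs).hasSum.ite_ne_and_ne hij)
  rw [zero_add] at hsum
  refine (hasSum_le (fun s => ?_) htail.summable.hasSum hsum).trans_eq (by ring)
  split_ifs with hs
  · calc |Q i s - Q j s| ≤ |Q i s| + |Q j s| := abs_sub _ _
      _ = Q i s + Q j s := by
        rw [abs_of_nonneg (hQ.1 i s hs.1.symm), abs_of_nonneg (hQ.1 j s hs.2.symm)]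
  · exact le_rfl

theorem qErgTerm_eq (hQ : IsIntensity Q) {i j : E} (hij : i ≠ j) :
    qErgTerm Q i j = (Q j i - Q i i) + (Q i j - Q j j) - tailRowDist Q i j := by
  rw [qErgTerm, abs_of_nonpos (by linarith [hQ.diag_nonpos i, hQ.1 j i hij.symm]),
    abs_of_nonneg (by linarith [hQ.diag_nonpos j, hQ.1 i j hij])]
  ring

theorem qErgTerm_nonneg (hQ : IsIntensity Q) {i j : E} (hij : i ≠ j) : 0 ≤ qErgTerm Q i j := by
  rw [hQ.qErgTerm_eq hij]
  linarith [hQ.tailRowDist_le hij, hQ.1 i j hij, hQ.1 j i hij.symm]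

theorem rowDist_eulerStep (hQ : IsIntensity Q) {h : ℝ} (hh : 0 ≤ h)
    (hstoch : ∀ i j, h * Q j i ≤ 1 + h * Q i i)
    {i j : E} (hij : i ≠ j) : rowDist (eulerStep Q h) i j = 2 - h * qErgTerm Q i j := by
  have hsummable := (((hQ.hasSum_eulerStep h i).summable.sub
    (hQ.hasSum_eulerStep h j).summable).abs)
  have hcol_i : eulerStep Q h i i - eulerStep Q h j i = 1 + h * Q i i - h * Q j i := by
    simp only [eulerStep, if_neg hij.symm, ↓reduceIte]
    ring
  have hcol_j : eulerStep Q h i j - eulerStep Q h j j = h * Q i j - (1 + h * Q j j) := by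
    simp only [eulerStep, if_neg hij, ↓reduceIte]
    ring
  rw [rowDist_eq_of_ne hsummable hij, hcol_i, hcol_j, tailRowDist_eulerStep Q hh,
    hQ.qErgTerm_eq hij, abs_of_nonneg (by linarith [hstoch i j]),
    abs_of_nonpos (by linarith [hstoch j i])]
  ring

end IsIntensity

theorem stmt16_general {E : Type*} [Nontrivial E] (Q : E → E → ℝ) (h : ℝ)
    (hQ : IsIntensity Q) (hpos : 0 < h)
    (hstoch : ∀ i j, h * Q j i ≤ 1 + h * Q i i) :
    ergCoeff (fun i j => (if i = j then (1 : ℝ) else 0) + h * Q i j) =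
      1 - h * qErgCoeff Q := by
  obtain ⟨i₀, j₀, hne⟩ := exists_pair_ne E
  have : Nonempty {p : E × E // p.1 ≠ p.2} := ⟨⟨(i₀, j₀), hne⟩⟩
  have hrow (q : {p : E × E // p.1 ≠ p.2}) :
      rowDist (eulerStep Q h) q.1.1 q.1.2 = 2 - h * qErgTerm Q q.1.1 q.1.2 :=
    hQ.rowDist_eulerStep hpos.le hstoch q.2
  have hbdd : BddAbove (Set.range fun q : {p : E × E // p.1 ≠ p.2} =>
      rowDist (eulerStep Q h) q.1.1 q.1.2) := by
    refine ⟨2, Set.forall_mem_range.2 fun q => ?_⟩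
    rw [hrow]
    exact sub_le_self 2 (mul_nonneg hpos.le (hQ.qErgTerm_nonneg q.2))
  have hsup := ciSup_eq_ciSup_subtype_of_dominated (p := fun p : E × E => p.1 ≠ p.2)
    (f := fun p => rowDist (eulerStep Q h) p.1 p.2) hbdd fun p hp =>
    ⟨(i₀, j₀), hne, by rw [not_not.1 hp, rowDist_self]; exact rowDist_nonneg _ _ _⟩
  have hinf : 2 - h * ⨅ q : {p : E × E // p.1 ≠ p.2}, qErgTerm Q q.1.1 q.1.2 =
      ⨆ q : {p : E × E // p.1 ≠ p.2}, (2 - h * qErgTerm Q q.1.1 q.1.2) :=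
    Antitone.map_ciInf_of_continuousAt (f := fun t => 2 - h * t) (by fun_prop)
      (fun _ _ hab => sub_le_sub_left (mul_le_mul_of_nonneg_left hab hpos.le) 2)
      ⟨0, Set.forall_mem_range.2 fun q => hQ.qErgTerm_nonneg q.2⟩
  change ergCoeff (eulerStep Q h) = _
  rw [ergCoeff_eq_iSup_rowDist, qErgCoeff_eq_iInf_qErgTerm, hsup, iSup_congr hrow, ← hinf]
  ring

/-- for P_h = I + hQ, the ergodicity coefficient satisfies
Λ₁(P_h) = 1 − h·Λ₁(Q). -/
theorem stmt16 {E : Type*} [Countable E] [Nontrivial E] (Q : E → E → ℝ) (h : ℝ)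
    (hQ : IsIntensity Q) (hQb : UnifBdd Q) (hpos : 0 < h)
    (hstoch : ∀ i j, h * Q j i ≤ 1 + h * Q i i)
    (hnn : 0 ≤ 1 - h * qErgCoeff Q) :
    ergCoeff (fun i j => (if i = j then (1 : ℝ) else 0) + h * Q i j) =
      1 - h * qErgCoeff Q :=
  stmt16_general Q h hQ hpos hstoch

end
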